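/- Let E be an elliptic curve, let x, y ∈ k(E) \ k with divisors of zeros/poles of degrees a and b respectively, suppose the divisors (x) and (y) have disjoint supports, and let D be a divisor with deg D > a + b. Then x·|D| + y·|D| = |D + (x)_∞ + (y)_∞|, where (x)_∞ denotes the polar divisor of x and |D| = H^0(E, O(D)) ⊆ k(E). -/

import Mathlib

/- STATEMENT 8:
Let `E` be an elliptic curve, let `x, y ∈ k(E) \ k` with `deg (x)_0 = deg (x)_∞ = a` and
`deg (y)_0 = deg (y)_∞ = b`, suppose the principal divisors `(x)` and `(y)` have disjoint
supports, and let `D` be a divisor with `deg D > a + b`. Then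
`x·|D| + y·|D| = |D + (x)_∞ + (y)_∞|` inside `k(E)`.

The elliptic curve is encoded via its function field `K/k`, with divisors finitely supported
`ℤ`-valued functions on the points `Pt`, spaces `sec D = |D| ⊆ K`, Riemann–Roch for genus one,
`|D| ⊓ |D'| = |inf{D,D'}|`, the principal divisor map `div`, and `f·|D| = |D - (f)|`. -/

def degD {Pt : Type} (D : Pt →₀ ℤ) : ℤ := D.sum fun _ n => n

/-
Since `x·|D| = |D - (x)|` and `y·|D| = |D - (y)|`, the claim is `|A| + |B| = |A ⊔ B|` for
`A = D - (x)`, `B = D - (y)`. The inclusion `⊆` is monotonicity of `|·|`. For the dimensions,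
`dim(|A| + |B|) = dim|A| + dim|B| - dim|A ⊓ B|`, and Riemann–Roch turns the right-hand side into
`deg A + deg B - deg (A ⊓ B) = deg (A ⊔ B) = dim |A ⊔ B|`, valid as soon as `deg (A ⊓ B) > 0`.
Disjointness of the supports of `(x)` and `(y)` gives `A ⊓ B = D - (x)_0 - (y)_0` and
`A ⊔ B = D + (x)_∞ + (y)_∞`, so `deg (A ⊓ B) = deg D - a - b > 0`.
-/

section Degree

variable {Pt : Type}

lemma degD_add (A B : Pt →₀ ℤ) : degD (A + B) = degD A + degD B :=
  Finsupp.sum_add_index' (fun _ => rfl) fun _ _ _ => rfl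

lemma degD_sub (A B : Pt →₀ ℤ) : degD (A - B) = degD A - degD B :=
  Finsupp.sum_sub_index fun _ _ _ => rfl

lemma degD_nonneg {A : Pt →₀ ℤ} (h : 0 ≤ A) : 0 ≤ degD A :=
  Finset.sum_nonneg fun p _ => h p

lemma degD_mono : Monotone (degD (Pt := Pt)) := fun A B hAB => by
  have := degD_nonneg (sub_nonneg.mpr hAB)
  rw [degD_sub] at this
  omega

lemma degD_sup_add_degD_inf (A B : Pt →₀ ℤ) :
    degD (A ⊔ B) + degD (A ⊓ B) = degD A + degD B := by
  have hpt : A ⊔ B + A ⊓ B = A + B := by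
    ext p
    simp only [Finsupp.add_apply, Finsupp.sup_apply, Finsupp.inf_apply]
    omega
  rw [← degD_add, hpt, degD_add]

end Degree

section DisjointSupport

variable {Pt : Type} {f g : Pt →₀ ℤ}

lemma eq_zero_or_eq_zero_of_disjoint_support (h : Disjoint f.support g.support) (p : Pt) :
    f p = 0 ∨ g p = 0 := by
  by_contra! hp
  exact Finset.disjoint_left.mp h (Finsupp.mem_support_iff.mpr hp.1)
    (Finsupp.mem_support_iff.mpr hp.2)

lemma sub_sup_sub_of_disjoint_support (h : Disjoint f.support g.support) (D : Pt →₀ ℤ) :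
    (D - f) ⊔ (D - g) = D + f⁻ + g⁻ := by
  ext p
  have := eq_zero_or_eq_zero_of_disjoint_support h p
  have hf : f⁻ p = max (-f p) 0 := rfl
  have hg : g⁻ p = max (-g p) 0 := rfl
  simp only [Finsupp.sup_apply, Finsupp.add_apply, Finsupp.sub_apply, hf, hg]
  omega

lemma sub_inf_sub_of_disjoint_support (h : Disjoint f.support g.support) (D : Pt →₀ ℤ) :
    (D - f) ⊓ (D - g) = D - f⁺ - g⁺ := by
  ext p
  have := eq_zero_or_eq_zero_of_disjoint_support h p
  have hf : f⁺ p = max (f p) 0 := rfl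
  have hg : g⁺ p = max (g p) 0 := rfl
  simp only [Finsupp.inf_apply, Finsupp.sub_apply, hf, hg]
  omega

end DisjointSupport

section RiemannRoch

variable {k K Pt : Type} [Field k] [Field K] [Algebra k K] {sec : (Pt →₀ ℤ) → Submodule k K}

lemma finiteDimensional_of_degD_pos
    (hRR : ∀ D : Pt →₀ ℤ, 0 < degD D → (Module.finrank k (sec D) : ℤ) = degD D)
    {D : Pt →₀ ℤ} (hD : 0 < degD D) : FiniteDimensional k (sec D) :=
  Module.finite_of_finrank_pos (by have := hRR D hD; omega)

theorem sec_sup_sec_eq_sec_sup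
    (hRR : ∀ D : Pt →₀ ℤ, 0 < degD D → (Module.finrank k (sec D) : ℤ) = degD D)
    (hinf : ∀ D D' : Pt →₀ ℤ, sec (D ⊓ D') = sec D ⊓ sec D')
    {A B : Pt →₀ ℤ} (hpos : 0 < degD (A ⊓ B)) :
    sec A ⊔ sec B = sec (A ⊔ B) := by
  have hA : 0 < degD A := hpos.trans_le (degD_mono inf_le_left)
  have hB : 0 < degD B := hpos.trans_le (degD_mono inf_le_right)
  have hAB : 0 < degD (A ⊔ B) := hA.trans_le (degD_mono le_sup_left)
  have := finiteDimensional_of_degD_pos hRR hA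
  have := finiteDimensional_of_degD_pos hRR hB
  have := finiteDimensional_of_degD_pos hRR hAB
  have hmono : Monotone sec := Monotone.of_map_inf hinf
  refine Submodule.eq_of_le_of_finrank_eq
    (sup_le (hmono le_sup_left) (hmono le_sup_right)) ?_
  have hdim := Submodule.finrank_sup_add_finrank_inf_eq (sec A) (sec B)
  rw [← hinf] at hdim
  have hdeg := degD_sup_add_degD_inf A B
  have := hRR A hA
  have := hRR B hB
  have := hRR _ hAB
  have := hRR _ hpos
  omega

end RiemannRoch

theorem stmt_8_general (k K : Type) [Field k] [Field K] [Algebra k K]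
    (Pt : Type)
    (sec : (Pt →₀ ℤ) → Submodule k K)
    (hRR : ∀ D : Pt →₀ ℤ, 0 < degD D → (Module.finrank k (sec D) : ℤ) = degD D)
    (hinf : ∀ D D' : Pt →₀ ℤ, sec (D ⊓ D') = sec D ⊓ sec D')
    (div : Kˣ → (Pt →₀ ℤ))
    -- `f·|D| = |D - (f)|` :
    (hsmul : ∀ (f : Kˣ) (D : Pt →₀ ℤ),
      Submodule.map (LinearMap.mulLeft k (f : K)) (sec D) = sec (D - div f))
    (x y : Kˣ)
    (hdisj : Disjoint (div x).support (div y).support)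
    (D : Pt →₀ ℤ)
    (hD : degD ((div x)⁺) + degD ((div y)⁺) < degD D) :
    Submodule.map (LinearMap.mulLeft k (x : K)) (sec D) ⊔
      Submodule.map (LinearMap.mulLeft k (y : K)) (sec D) =
    sec (D + (div x)⁻ + (div y)⁻) := by
  have hpos : 0 < degD ((D - div x) ⊓ (D - div y)) := by
    rw [sub_inf_sub_of_disjoint_support hdisj, degD_sub, degD_sub]
    omega
  rw [hsmul, hsmul, sec_sup_sec_eq_sec_sup hRR hinf hpos,
    sub_sup_sub_of_disjoint_support hdisj]

theorem stmt_8 (k K : Type) [Field k] [IsAlgClosed k] [Field K] [Algebra k K]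
    (Pt : Type)
    (sec : (Pt →₀ ℤ) → Submodule k K)
    (secFD : ∀ D, FiniteDimensional k (sec D))
    (hRR : ∀ D : Pt →₀ ℤ, 0 < degD D → (Module.finrank k (sec D) : ℤ) = degD D)
    (hinf : ∀ D D' : Pt →₀ ℤ, sec (D ⊓ D') = sec D ⊓ sec D')
    (div : Kˣ → (Pt →₀ ℤ))
    (hdivdeg : ∀ f : Kˣ, degD (div f) = 0)
    -- `f·|D| = |D - (f)|` :
    (hsmul : ∀ (f : Kˣ) (D : Pt →₀ ℤ),
      Submodule.map (LinearMap.mulLeft k (f : K)) (sec D) = sec (D - div f))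
    (x y : Kˣ)
    (hx : (x : K) ∉ Set.range (algebraMap k K))
    (hy : (y : K) ∉ Set.range (algebraMap k K))
    (hdisj : Disjoint (div x).support (div y).support)
    (D : Pt →₀ ℤ)
    (hD : degD ((div x)⁺) + degD ((div y)⁺) < degD D) :
    Submodule.map (LinearMap.mulLeft k (x : K)) (sec D) ⊔
      Submodule.map (LinearMap.mulLeft k (y : K)) (sec D) =
    sec (D + (div x)⁻ + (div y)⁻) :=
  stmt_8_general k K Pt sec hRR hinf div hsmul x y hdisj D hD
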